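/- The value of every average-time game on a timed automaton is regionally constant: for all states s and s' of the timed automaton lying in the same region, val^T(s) = val^T(s'). -/

import Mathlib

noncomputable section

attribute [local instance] Classical.propDecidable

/-- A two-player (Min/Max) game arena with real-valued step costs. -/
structure Arena (Conf Move : Type) where
  Tr : Conf → Move → Conf → Prop
  cost : Conf → Move → ℝ
  IsMin : Conf → Prop

namespace Arena

variable {Conf Move : Type}

/-- A finite run in the arena. -/
structure FinRun (G : Arena Conf Move) where
  n : ℕ
  q : Fin (n + 1) → Conf
  m : Fin n → Move
  valid : ∀ i : Fin n, G.Tr (q i.castSucc) (m i) (q i.succ)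

/-- The last configuration of a finite run. -/
def FinRun.last {G : Arena Conf Move} (r : G.FinRun) : Conf := r.q (Fin.last r.n)

/-- The first configuration of a finite run. -/
def FinRun.first {G : Arena Conf Move} (r : G.FinRun) : Conf := r.q 0

/-- The trivial run consisting of a single configuration. -/
def single (G : Arena Conf Move) (q0 : Conf) : G.FinRun :=
  ⟨0, fun _ => q0, Fin.elim0, fun i => i.elim0⟩

/-- Extending a finite run by one transition. -/
def FinRun.extend {G : Arena Conf Move} (r : G.FinRun) (mv : Move) (q' : Conf)
    (h : G.Tr r.last mv q') : G.FinRun where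
  n := r.n + 1
  q := Fin.snoc r.q q'
  m := Fin.snoc r.m mv
  valid := by
    intro i
    induction i using Fin.lastCases with
    | last =>
        simpa [FinRun.last, Fin.snoc_castSucc, Fin.succ_last, Fin.snoc_last] using h
    | cast j =>
        have hv := r.valid j
        rw [Fin.succ_castSucc]
        simp only [Fin.snoc_castSucc]
        exact hv

/-- Strategies of player Min: mappings from finite runs to moves that are
available whenever the last configuration belongs to Min. -/
def MinStrategy (G : Arena Conf Move) : Type :=
  {σ : G.FinRun → Move // ∀ r : G.FinRun, G.IsMin r.last → ∃ q', G.Tr r.last (σ r) q'}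

/-- Strategies of player Max. -/
def MaxStrategy (G : Arena Conf Move) : Type :=
  {σ : G.FinRun → Move // ∀ r : G.FinRun, ¬ G.IsMin r.last → ∃ q', G.Tr r.last (σ r) q'}

/-- A strategy is positional if its choice depends only on the last configuration. -/
def Positional {G : Arena Conf Move} (σ : G.FinRun → Move) : Prop :=
  ∀ r r' : G.FinRun, r.last = r'.last → σ r = σ r'

/-- The finite prefixes of the unique play from `q0` in which Min uses `μ`
and Max uses `χ`. -/
def play (G : Arena Conf Move) (μ : G.MinStrategy) (χ : G.MaxStrategy) (q0 : Conf) :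
    ℕ → G.FinRun
  | 0 => G.single q0
  | n + 1 =>
    let r := G.play μ χ q0 n
    if h : G.IsMin r.last then
      r.extend (μ.1 r) (Classical.choose (μ.2 r h)) (Classical.choose_spec (μ.2 r h))
    else
      r.extend (χ.1 r) (Classical.choose (χ.2 r h)) (Classical.choose_spec (χ.2 r h))

/-- Total cost (e.g. total time) of a finite run. -/
def FinRun.time {G : Arena Conf Move} (r : G.FinRun) : ℝ :=
  ∑ i : Fin r.n, G.cost (r.q i.castSucc) (r.m i)

/-- Payoff of player Min (to be minimised): limsup of average cost. -/
def AMin (G : Arena Conf Move) (q0 : Conf) (μ : G.MinStrategy) (χ : G.MaxStrategy) : ℝ :=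
  Filter.limsup (fun n : ℕ => (G.play μ χ q0 n).time / n) Filter.atTop

/-- Payoff of player Max (to be maximised): liminf of average cost. -/
def AMax (G : Arena Conf Move) (q0 : Conf) (μ : G.MinStrategy) (χ : G.MaxStrategy) : ℝ :=
  Filter.liminf (fun n : ℕ => (G.play μ χ q0 n).time / n) Filter.atTop

/-- Upper value of the game at `q0`. -/
def upperVal (G : Arena Conf Move) (q0 : Conf) : ℝ :=
  ⨅ μ : G.MinStrategy, ⨆ χ : G.MaxStrategy, G.AMin q0 μ χ

/-- Lower value of the game at `q0`. -/
def lowerVal (G : Arena Conf Move) (q0 : Conf) : ℝ :=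
  ⨆ χ : G.MaxStrategy, ⨅ μ : G.MinStrategy, G.AMax q0 μ χ

/-- The value of the game at `q0` (meaningful when the game is determined). -/
def val (G : Arena Conf Move) (q0 : Conf) : ℝ := G.upperVal q0

end Arena
/-- `k`-bounded clock valuations. -/
def IsVal (k : ℕ) {C : Type} (ν : C → ℝ) : Prop := ∀ c, 0 ≤ ν c ∧ ν c ≤ (k : ℝ)

/-- Two clock valuations satisfy exactly the same simple clock constraints
`c ⋈ i` and `c − c' ⋈ i` with `i ∈ {0,…,k}` and `⋈ ∈ {<,=,>}` (hence also ≤, ≥). -/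
def RegEq (k : ℕ) {C : Type} (ν ν' : C → ℝ) : Prop :=
  ∀ i : ℕ, i ≤ k → ∀ c c' : C,
    ((ν c < (i : ℝ) ↔ ν' c < (i : ℝ)) ∧ (ν c = (i : ℝ) ↔ ν' c = (i : ℝ)) ∧
      ((i : ℝ) < ν c ↔ (i : ℝ) < ν' c)) ∧
    ((ν c - ν c' < (i : ℝ) ↔ ν' c - ν' c' < (i : ℝ)) ∧
      (ν c - ν c' = (i : ℝ) ↔ ν' c - ν' c' = (i : ℝ)) ∧
      ((i : ℝ) < ν c - ν c' ↔ (i : ℝ) < ν' c - ν' c'))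

/-- An average-time game on a (bounded) timed automaton: a timed automaton
together with a partition of locations between players Min and Max. -/
structure TimedGame where
  L : Type
  C : Type
  A : Type
  finL : Finite L
  finC : Finite C
  finA : Finite A
  k : ℕ
  S : Set (L × (C → ℝ))
  En : A → Set (L × (C → ℝ))
  δ : L → A → L
  ϱ : A → Set C
  LMin : Set L
  bounded : ∀ s ∈ S, IsVal k s.2
  S_zone : (∀ (ℓ : L) (ν ν' : C → ℝ), RegEq k ν ν' → ((ℓ, ν) ∈ S ↔ (ℓ, ν') ∈ S)) ∧
    ∀ ℓ : L, Convex ℝ {ν : C → ℝ | (ℓ, ν) ∈ S}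
  En_sub : ∀ a, En a ⊆ S
  En_zone : ∀ a : A,
    (∀ (ℓ : L) (ν ν' : C → ℝ), RegEq k ν ν' → ((ℓ, ν) ∈ En a ↔ (ℓ, ν') ∈ En a)) ∧
    ∀ ℓ : L, Convex ℝ {ν : C → ℝ | (ℓ, ν) ∈ En a}
  nonstuck : ∀ s ∈ S, ∃ (t : ℝ) (a : A), 0 ≤ t ∧
    (∀ t', 0 ≤ t' → t' ≤ t → (s.1, fun c => s.2 c + t') ∈ S) ∧
    ((s.1, fun c => s.2 c + t) ∈ En a) ∧
    ((δ s.1 a, fun c => if c ∈ ϱ a then 0 else s.2 c + t) ∈ S)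

namespace TimedGame

/-- Configurations of the timed automaton. -/
abbrev Q (T : TimedGame) : Type := T.L × (T.C → ℝ)

/-- Resetting the clocks in `X` to zero. -/
def resetv (T : TimedGame) (ν : T.C → ℝ) (X : Set T.C) : T.C → ℝ :=
  fun c => if c ∈ X then 0 else ν c

/-- The successor configuration after the timed action `τ = (t, a)`. -/
def tsucc (T : TimedGame) (s : T.Q) (τ : ℝ × T.A) : T.Q :=
  (T.δ s.1 τ.2, T.resetv (fun c => s.2 c + τ.1) (T.ϱ τ.2))

/-- The transition relation `s →_τ s'` of the timed automaton. -/
def Trans (T : TimedGame) (s : T.Q) (τ : ℝ × T.A) (s' : T.Q) : Prop :=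
  0 ≤ τ.1 ∧ (∀ t', 0 ≤ t' → t' ≤ τ.1 → (s.1, fun c => s.2 c + t') ∈ T.S) ∧
  ((s.1, fun c => s.2 c + τ.1) ∈ T.En τ.2) ∧ s' = T.tsucc s τ ∧ s' ∈ T.S

/-- The game arena of the average-time game played on the timed automaton. -/
def taArena (T : TimedGame) : Arena {s : T.Q // s ∈ T.S} (ℝ × T.A) where
  Tr := fun s τ s' => T.Trans s.1 τ s'.1
  cost := fun _ τ => τ.1
  IsMin := fun s => s.1.1 ∈ T.LMin

/-- A clock region: an equivalence class of the region equivalence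
(restricted to `k`-bounded valuations). -/
def IsClockRegion (T : TimedGame) (P : Set (T.C → ℝ)) : Prop :=
  ∃ ν : T.C → ℝ, P = {ν' | IsVal T.k ν' ∧ RegEq T.k ν ν'}

/-- Regions: pairs of a location and a clock region. -/
def Region (T : TimedGame) : Type :=
  T.L × {P : Set (T.C → ℝ) // T.IsClockRegion P}

/-- The clock region of a valuation. -/
def clockRegionOf (T : TimedGame) (ν : T.C → ℝ) : {P : Set (T.C → ℝ) // T.IsClockRegion P} :=
  ⟨{ν' | IsVal T.k ν' ∧ RegEq T.k ν ν'}, ⟨ν, rfl⟩⟩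

/-- The region `[s]` of a configuration `s`. -/
def regionOf (T : TimedGame) (s : T.Q) : T.Region := (s.1, T.clockRegionOf s.2)

/-- The configurations `Ω` of the region graphs: pairs of a configuration
of the timed automaton and a region. -/
abbrev Omega (T : TimedGame) : Type := T.Q × T.Region

/-- `(s, (ℓ, P))` is a state of the closed region graph: the locations match
and `s`'s valuation lies in the closure of the clock region `P`. -/
def barS (T : TimedGame) (q : T.Omega) : Prop :=
  q.1.1 = q.2.1 ∧ q.1.2 ∈ closure q.2.2.1

/-- `(s, (ℓ, P))` is a state of the region graph: the locations match and
`s`'s valuation lies in the clock region `P`. -/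
def tildeS (T : TimedGame) (q : T.Omega) : Prop :=
  q.1.1 = q.2.1 ∧ q.1.2 ∈ q.2.2.1

/-- `R →_* R'` : the region `R'` is a time successor of `R`. -/
def timeSucc (T : TimedGame) (R R' : T.Region) : Prop :=
  R.1 = R'.1 ∧ ∀ ν ∈ R.2.1, ∃ t : ℝ, 0 ≤ t ∧
    (∀ t', 0 ≤ t' → t' ≤ t → (R.1, fun c => ν c + t') ∈ T.S) ∧
    (fun c => ν c + t) ∈ R'.2.1

/-- The discrete transition `s →^a s'` of the timed automaton. -/
def astep (T : TimedGame) (s : T.Q) (a : T.A) (s' : T.Q) : Prop :=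
  s ∈ T.S ∧ s' ∈ T.S ∧ s ∈ T.En a ∧ s' = (T.δ s.1 a, T.resetv s.2 (T.ϱ a))

/-- `R →^a R'` at the level of regions. -/
def regAct (T : TimedGame) (R : T.Region) (a : T.A) (R' : T.Region) : Prop :=
  ∃ ν ∈ R.2.1, ∃ ν' ∈ R'.2.1, T.astep (R.1, ν) a (R'.1, ν')

/-- Moves of the region graphs: a delay, an intermediate region, and an action. -/
abbrev RMove (T : TimedGame) : Type := ℝ × T.Region × T.A

/-- Transitions underlying pre-runs: `(s', R') = succ((s,R), (t,R'',a))` with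
`R →_* R'' →^a R'`. -/
def preTrans (T : TimedGame) (q : T.Omega) (m : T.RMove) (q' : T.Omega) : Prop :=
  0 ≤ m.1 ∧ T.timeSucc q.2 m.2.1 ∧ T.regAct m.2.1 m.2.2 q'.2 ∧
  q'.1 = T.tsucc q.1 (m.1, m.2.2)

/-- Labelled transitions of the closed region graph `T̄`. -/
def cTrans (T : TimedGame) (q : T.Omega) (m : T.RMove) (q' : T.Omega) : Prop :=
  T.preTrans q m q' ∧ T.barS q ∧ T.barS q' ∧
  (fun c => q.1.2 c + m.1) ∈ closure m.2.1.2.1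

/-- Labelled transitions of the boundary region graph `T̂`: additionally the
intermediate valuation lies on the boundary of the intermediate region. -/
def bTrans (T : TimedGame) (q : T.Omega) (m : T.RMove) (q' : T.Omega) : Prop :=
  T.cTrans q m q' ∧ (fun c => q.1.2 c + m.1) ∈ frontier m.2.1.2.1

/-- Labelled transitions of the region graph `T̃`. -/
def rTrans (T : TimedGame) (q : T.Omega) (m : T.RMove) (q' : T.Omega) : Prop :=
  T.preTrans q m q' ∧ T.tildeS q ∧ T.tildeS q' ∧
  (fun c => q.1.2 c + m.1) ∈ m.2.1.2.1

/-- The arena of pre-runs over `Ω`. -/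
def preArena (T : TimedGame) : Arena T.Omega T.RMove where
  Tr := T.preTrans
  cost := fun _ m => m.1
  IsMin := fun q => q.2.1 ∈ T.LMin

/-- Finite pre-runs. -/
abbrev PreRunF (T : TimedGame) : Type := (T.preArena).FinRun

/-- Pre-strategies of Min. -/
abbrev MinPre (T : TimedGame) : Type := (T.preArena).MinStrategy

/-- Pre-strategies of Max. -/
abbrev MaxPre (T : TimedGame) : Type := (T.preArena).MaxStrategy

/-- A pre-strategy of Min is a strategy in the closed region graph `T̄`
if it always waits into the closure of the chosen intermediate region. -/
def MinClosed (T : TimedGame) (μ : T.MinPre) : Prop :=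
  ∀ r : T.PreRunF,
    (fun c => (Arena.FinRun.last r).1.2 c + (μ.1 r).1) ∈ closure (μ.1 r).2.1.2.1

def MaxClosed (T : TimedGame) (χ : T.MaxPre) : Prop :=
  ∀ r : T.PreRunF,
    (fun c => (Arena.FinRun.last r).1.2 c + (χ.1 r).1) ∈ closure (χ.1 r).2.1.2.1

/-- Admissible strategies: strategies in the region graph `T̃`. -/
def MinAdmissible (T : TimedGame) (μ : T.MinPre) : Prop :=
  ∀ r : T.PreRunF,
    (fun c => (Arena.FinRun.last r).1.2 c + (μ.1 r).1) ∈ (μ.1 r).2.1.2.1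

def MaxAdmissible (T : TimedGame) (χ : T.MaxPre) : Prop :=
  ∀ r : T.PreRunF,
    (fun c => (Arena.FinRun.last r).1.2 c + (χ.1 r).1) ∈ (χ.1 r).2.1.2.1

/-- Boundary strategies of Min: the delay is the **infimum** of the delays
reaching the closure of the chosen intermediate region. -/
def MinBoundary (T : TimedGame) (μ : T.MinPre) : Prop :=
  ∀ r : T.PreRunF,
    (μ.1 r).1 = sInf {t : ℝ | 0 ≤ t ∧
      (fun c => (Arena.FinRun.last r).1.2 c + t) ∈ closure (μ.1 r).2.1.2.1}

/-- Boundary strategies of Max: the delay is the **supremum** of the delays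
reaching the closure of the chosen intermediate region. -/
def MaxBoundary (T : TimedGame) (χ : T.MaxPre) : Prop :=
  ∀ r : T.PreRunF,
    (χ.1 r).1 = sSup {t : ℝ | 0 ≤ t ∧
      (fun c => (Arena.FinRun.last r).1.2 c + t) ∈ closure (χ.1 r).2.1.2.1}

/-- The sequence of regions visited by a finite pre-run (its type, part 1). -/
def typeConfs (T : TimedGame) (r : T.PreRunF) : ℕ → Option T.Region :=
  fun i => if h : i < r.n + 1 then some ((r.q ⟨i, h⟩).2) else none

/-- The sequence of intermediate regions and actions of a finite pre-run
(its type, part 2). -/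
def typeMoves (T : TimedGame) (r : T.PreRunF) : ℕ → Option (T.Region × T.A) :=
  fun i => if h : i < r.n then some ((r.m ⟨i, h⟩).2) else none

/-- Two finite pre-runs have the same type. -/
def sameType (T : TimedGame) (r r' : T.PreRunF) : Prop :=
  T.typeConfs r = T.typeConfs r' ∧ T.typeMoves r = T.typeMoves r'

/-- The waiting time `t(s, α)` of the boundary timed action `α = (b, c, a)`. -/
def tOf (T : TimedGame) (s : T.Q) (α : ℕ × T.C × T.A) : ℝ :=
  if s.2 α.2.1 ≤ (α.1 : ℝ) then (α.1 : ℝ) - s.2 α.2.1 else 0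

/-- Type-preserving boundary strategies of Min: runs of the same type are
assigned the same intermediate region, action and boundary timed action. -/
def MinTP (T : TimedGame) (μ : T.MinPre) : Prop :=
  T.MinBoundary μ ∧
  ∀ r r' : T.PreRunF, T.sameType r r' →
    (μ.1 r).2 = (μ.1 r').2 ∧
    ∃ (b : ℕ) (c : T.C), b ≤ T.k ∧
      (μ.1 r).1 = T.tOf (Arena.FinRun.last r).1 (b, c, (μ.1 r).2.2) ∧
      (μ.1 r').1 = T.tOf (Arena.FinRun.last r').1 (b, c, (μ.1 r').2.2)

def MaxTP (T : TimedGame) (χ : T.MaxPre) : Prop :=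
  T.MaxBoundary χ ∧
  ∀ r r' : T.PreRunF, T.sameType r r' →
    (χ.1 r).2 = (χ.1 r').2 ∧
    ∃ (b : ℕ) (c : T.C), b ≤ T.k ∧
      (χ.1 r).1 = T.tOf (Arena.FinRun.last r).1 (b, c, (χ.1 r).2.2) ∧
      (χ.1 r').1 = T.tOf (Arena.FinRun.last r').1 (b, c, (χ.1 r').2.2)

/-- `μ_ε` is `ε`-close to the type-preserving boundary strategy `μ` of Min. -/
def EpsCloseMin (T : TimedGame) (μ με : T.MinPre) (ε : ℝ) : Prop :=
  ∀ r : T.PreRunF, (με.1 r).2 = (μ.1 r).2 ∧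
    (fun c => (Arena.FinRun.last r).1.2 c + (με.1 r).1) ∈ (μ.1 r).2.1.2.1 ∧
    (με.1 r).1 ≤ (μ.1 r).1 + ε

/-- `χ_ε` is `ε`-close to the type-preserving boundary strategy `χ` of Max. -/
def EpsCloseMax (T : TimedGame) (χ χε : T.MaxPre) (ε : ℝ) : Prop :=
  ∀ r : T.PreRunF, (χε.1 r).2 = (χ.1 r).2 ∧
    (fun c => (Arena.FinRun.last r).1.2 c + (χε.1 r).1) ∈ (χ.1 r).2.1.2.1 ∧
    (χ.1 r).1 - ε ≤ (χε.1 r).1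

/-- Upper value of the game on the subgraph of region graphs whose strategies
are the pre-strategies satisfying `PMin`, `PMax` respectively. -/
def upperG (T : TimedGame) (PMin : T.MinPre → Prop) (PMax : T.MaxPre → Prop)
    (q : T.Omega) : ℝ :=
  ⨅ μ : {μ : T.MinPre // PMin μ}, ⨆ χ : {χ : T.MaxPre // PMax χ},
    Arena.AMin T.preArena q μ.1 χ.1

/-- Lower value. -/
def lowerG (T : TimedGame) (PMin : T.MinPre → Prop) (PMax : T.MaxPre → Prop)
    (q : T.Omega) : ℝ :=
  ⨆ χ : {χ : T.MaxPre // PMax χ}, ⨅ μ : {μ : T.MinPre // PMin μ},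
    Arena.AMax T.preArena q μ.1 χ.1

def upperBar (T : TimedGame) : T.Omega → ℝ := T.upperG T.MinClosed T.MaxClosed
def lowerBar (T : TimedGame) : T.Omega → ℝ := T.lowerG T.MinClosed T.MaxClosed
/-- The value of the average-time game on the closed region graph `T̄`. -/
def valBar (T : TimedGame) : T.Omega → ℝ := T.upperBar

def upperHat (T : TimedGame) : T.Omega → ℝ := T.upperG T.MinBoundary T.MaxBoundary
def lowerHat (T : TimedGame) : T.Omega → ℝ := T.lowerG T.MinBoundary T.MaxBoundary
/-- The value of the average-time game on the boundary region graph `T̂`. -/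
def valHat (T : TimedGame) : T.Omega → ℝ := T.upperHat

def upperTilde (T : TimedGame) : T.Omega → ℝ := T.upperG T.MinAdmissible T.MaxAdmissible
def lowerTilde (T : TimedGame) : T.Omega → ℝ := T.lowerG T.MinAdmissible T.MaxAdmissible
/-- The value of the average-time game on the region graph `T̃`. -/
def valTilde (T : TimedGame) : T.Omega → ℝ := T.upperTilde

/-- A function is simple on a set `X` of configurations. -/
def SimpleOn (T : TimedGame) (X : Set T.Omega) (F : T.Omega → ℝ) : Prop :=
  (∃ e : ℤ, ∀ q ∈ X, F q = (e : ℝ)) ∨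
  (∃ (e : ℤ) (c : T.C), ∀ q ∈ X, F q = (e : ℝ) - q.1.2 c)

/-- A function on the configurations of the closed region graph is regionally
simple. -/
def RegionallySimple (T : TimedGame) (F : T.Omega → ℝ) : Prop :=
  ∀ R : T.Region, T.SimpleOn {q : T.Omega | T.barS q ∧ q.2 = R} F

/-- A function on the configurations of the closed region graph is regionally
constant. -/
def RegionallyConstant (T : TimedGame) (F : T.Omega → ℝ) : Prop :=
  ∀ R : T.Region, ∃ v : ℝ, ∀ q : T.Omega, T.barS q → q.2 = R → F q = v

/-- The configuration `(s, [s])` of the region graphs determined by a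
configuration `s` of the timed automaton. -/
def confOf (T : TimedGame) (s : T.Q) : T.Omega := (s, T.regionOf s)

/-- A region is thin if some clock has an integer value throughout its closure. -/
def Thin (T : TimedGame) (R : T.Region) : Prop :=
  ∃ c : T.C, ∀ ν ∈ closure R.2.1, ∃ m : ℤ, ν c = (m : ℝ)

/-- `R'` is the immediate time successor of `R`. -/
def ImmTimeSucc (T : TimedGame) (R R' : T.Region) : Prop :=
  R.1 = R'.1 ∧ ∀ ν ∈ R.2.1, ∃ ε : ℝ, 0 < ε ∧
    ∀ t : ℝ, 0 < t → t < ε → (fun c => ν c + t) ∈ R'.2.1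

end TimedGame

/-!
Treat the total elapsed time as an extra, unbounded clock, and relate two configurations when
they share the location and their augmented valuations are region-equivalent with respect to all
integers. This is a bisimulation of the game: a delay on one side is matched by a delay on the
other that keeps the augmented valuations equivalent (if some clock reaches an integer, that
pins the matching delay; otherwise it is any point of a nonempty intersection of open unit
intervals), and invariants, guards and resets respect region equivalence. So every strategy of
Min from one state is simulated from the other against a simulated strategy of Max, with
elapsed times that always share their integer part; the long-run averages then coincide, hence
so do the upper values.
-/

open Filter Set Topology

theorem Real.sInf_le_sInf_of_forall_add_mem {S T : Set ℝ}
    (hST : ∀ ε > 0, ∀ a ∈ S, a + ε ∈ T) (hTS : ∀ ε > 0, ∀ a ∈ T, a + ε ∈ S) :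
    sInf S ≤ sInf T := by
  rcases T.eq_empty_or_nonempty with rfl | hT
  · obtain rfl : S = ∅ := eq_empty_of_forall_notMem fun a ha => hST 1 one_pos a ha
    rfl
  by_cases hTb : BddBelow T
  · obtain ⟨b, hb⟩ := hTb
    have hSb : BddBelow S := ⟨b, fun a ha =>
      le_of_forall_pos_le_add fun ε hε => hb (hST ε hε a ha)⟩
    refine le_csInf hT fun a ha => le_of_forall_pos_le_add fun ε hε => ?_
    exact csInf_le hSb (hTS ε hε a ha)
  · have hSb : ¬ BddBelow S := fun ⟨b, hb⟩ =>
      hTb ⟨b - 1, fun a ha => by linarith [hb (hTS 1 one_pos a ha)]⟩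
    rw [Real.sInf_of_not_bddBelow hSb, Real.sInf_of_not_bddBelow hTb]

theorem Real.limsup_eq_of_tendsto_sub {ι : Type*} {f : Filter ι} {u v : ι → ℝ}
    (h : Tendsto (u - v) f (𝓝 0)) : limsup u f = limsup v f := by
  have hshift : ∀ {u v : ι → ℝ}, Tendsto (u - v) f (𝓝 0) →
      ∀ ε > 0, ∀ a ∈ {a | ∀ᶠ n in f, v n ≤ a},
        a + ε ∈ {a | ∀ᶠ n in f, u n ≤ a} := by
    intro u v h ε hε a ha
    filter_upwards [ha, h.eventually (gt_mem_nhds hε)] with n hn hlt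
    simp only [Pi.sub_apply] at hlt
    linarith
  have h' : Tendsto (v - u) f (𝓝 0) := by simpa [Pi.sub_def] using h.neg
  rw [limsup_eq, limsup_eq]
  exact le_antisymm (Real.sInf_le_sInf_of_forall_add_mem (hshift h') (hshift h))
    (Real.sInf_le_sInf_of_forall_add_mem (hshift h) (hshift h'))

theorem Real.limsup_div_eq_of_abs_sub_le {u v : ℕ → ℝ} {D : ℝ}
    (h : ∀ n, |u n - v n| ≤ D) :
    limsup (fun n => u n / n) atTop = limsup (fun n => v n / n) atTop := by
  refine Real.limsup_eq_of_tendsto_sub <|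
    squeeze_zero_norm (a := fun n : ℕ => D / n) (fun n => ?_)
      (tendsto_const_div_atTop_nhds_zero_nat D)
  rw [Real.norm_eq_abs, Pi.sub_apply, ← sub_div, abs_div, Nat.abs_cast]
  exact div_le_div_of_nonneg_right (h n) n.cast_nonneg

theorem Real.limsup_mem_Icc {u : ℕ → ℝ} {a b : ℝ} (h : ∀ᶠ n in atTop, u n ∈ Icc a b) :
    limsup u atTop ∈ Icc a b :=
  ⟨le_limsup_of_le (isBoundedUnder_of_eventually_le (h.mono fun _ hn => hn.2))
      fun _ hc => (hc.and h).exists.elim fun _ hn => hn.2.1.trans hn.1,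
    limsup_le_of_le (isCoboundedUnder_le_of_eventually_le _ (h.mono fun _ hn => hn.1))
      (h.mono fun _ hn => hn.2)⟩

def IntEquiv (x y : ℝ) : Prop := ⌊x⌋ = ⌊y⌋ ∧ ⌈x⌉ = ⌈y⌉

namespace IntEquiv

variable {x y : ℝ}

theorem refl (x : ℝ) : IntEquiv x x := ⟨rfl, rfl⟩

theorem symm (h : IntEquiv x y) : IntEquiv y x := ⟨h.1.symm, h.2.symm⟩

theorem neg (h : IntEquiv x y) : IntEquiv (-x) (-y) := by
  simp only [IntEquiv, Int.floor_neg, Int.ceil_neg, h.1, h.2, and_self]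

theorem add_intCast (h : IntEquiv x y) (m : ℤ) : IntEquiv (x + m) (y + m) := by
  simp only [IntEquiv, Int.floor_add_intCast, Int.ceil_add_intCast, h.1, h.2, and_self]

theorem lt_iff (h : IntEquiv x y) (m : ℤ) : x < m ↔ y < m := by
  rw [← Int.floor_lt, h.1, Int.floor_lt]

theorem lt_iff' (h : IntEquiv x y) (m : ℤ) : (m : ℝ) < x ↔ (m : ℝ) < y := by
  rw [← Int.lt_ceil, h.2, Int.lt_ceil]

theorem le_iff (h : IntEquiv x y) (m : ℤ) : x ≤ m ↔ y ≤ m := by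
  rw [← Int.ceil_le, h.2, Int.ceil_le]

theorem eq_iff (h : IntEquiv x y) (m : ℤ) : x = m ↔ y = m := by
  rw [le_antisymm_iff, le_antisymm_iff, ← Int.le_floor, ← Int.le_floor, h.1, h.le_iff]

theorem abs_sub_lt_one (h : IntEquiv x y) : |x - y| < 1 :=
  Int.abs_sub_lt_one_of_floor_eq_floor h.1

theorem of_forall_lt_iff
    (h : ∀ m : ℤ, (x < m ↔ y < m) ∧ ((m : ℝ) < x ↔ (m : ℝ) < y)) : IntEquiv x y := by
  refine ⟨(Int.floor_eq_iff.2 ⟨?_, ?_⟩).symm, (Int.ceil_eq_iff.2 ⟨?_, ?_⟩).symm⟩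
  · exact not_lt.1 fun hy => (Int.floor_le x).not_gt ((h _).1.2 hy)
  · exact_mod_cast (h (⌊x⌋ + 1)).1.1 (by exact_mod_cast Int.lt_floor_add_one x)
  · have hx : ((⌈x⌉ - 1 : ℤ) : ℝ) < x := by push_cast; linarith [Int.ceil_lt_add_one x]
    exact_mod_cast (h (⌈x⌉ - 1)).2.1 hx
  · exact not_lt.1 fun hy => (Int.le_ceil x).not_gt ((h _).2.2 hy)

theorem of_mem_Ioo {m : ℤ} (hx : x ∈ Ioo (m : ℝ) (m + 1)) (hy : y ∈ Ioo (m : ℝ) (m + 1)) :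
    IntEquiv x y := by
  have hfloor : ∀ z ∈ Ioo (m : ℝ) (m + 1), ⌊z⌋ = m ∧ ⌈z⌉ = m + 1 := fun z hz =>
    ⟨Int.floor_eq_iff.2 ⟨hz.1.le, hz.2⟩,
      Int.ceil_eq_iff.2 ⟨by push_cast; linarith [hz.1], by push_cast; exact hz.2.le⟩⟩
  rw [IntEquiv, (hfloor x hx).1, (hfloor x hx).2, (hfloor y hy).1, (hfloor y hy).2]
  exact ⟨rfl, rfl⟩

end IntEquiv

theorem exists_nonneg_forall_mem_Ioo {D : Type} [Finite D] (l : D → ℝ)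
    (hl : ∀ d e, l d < l e + 1) (hl0 : ∀ d, 0 < l d + 1) :
    ∃ t ≥ 0, ∀ d, t ∈ Ioo (l d) (l d + 1) := by
  rcases isEmpty_or_nonempty D with hD | hD
  · exact ⟨0, le_rfl, isEmptyElim⟩
  obtain ⟨dmax, hmax⟩ := Finite.exists_max l
  obtain ⟨dmin, hmin⟩ := Finite.exists_min l
  have hlow : max 0 (l dmax) < l dmin + 1 := max_lt (hl0 dmin) (hl dmax dmin)
  refine ⟨(max 0 (l dmax) + (l dmin + 1)) / 2, by linarith [le_max_left 0 (l dmax)],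
    fun d => ?_⟩
  constructor <;> linarith [hmax d, hmin d, le_max_right 0 (l dmax)]

structure RegEquiv {D : Type} (ν ν' : D → ℝ) : Prop where
  val : ∀ d, IntEquiv (ν d) (ν' d)
  sub : ∀ d e, IntEquiv (ν d - ν e) (ν' d - ν' e)

namespace RegEquiv

variable {D : Type} {ν ν' : D → ℝ}

theorem symm (h : RegEquiv ν ν') : RegEquiv ν' ν :=
  ⟨fun d => (h.val d).symm, fun d e => (h.sub d e).symm⟩

theorem exists_delay [Finite D] (h : RegEquiv ν ν') {t : ℝ} (ht : 0 ≤ t) :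
    ∃ t' ≥ 0, RegEquiv (fun d => ν d + t) (fun d => ν' d + t') := by
  suffices ∃ t' ≥ 0, ∀ d, IntEquiv (ν d + t) (ν' d + t') by
    obtain ⟨t', ht', hval⟩ := this
    exact ⟨t', ht', hval, fun d e => by simpa only [add_sub_add_right_eq_sub] using h.sub d e⟩
  by_cases hint : ∃ d₀, ∃ m : ℤ, ν d₀ + t = m
  · obtain ⟨d₀, m, hm⟩ := hint
    refine ⟨m - ν' d₀, ?_, fun d => ?_⟩
    · linarith [((h.val d₀).le_iff m).1 (by linarith)]
    · have hd : ν d + t = (ν d - ν d₀) + m := by linarith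
      rw [hd, show ν' d + (m - ν' d₀) = (ν' d - ν' d₀) + m by ring]
      exact (h.sub d d₀).add_intCast m
  · simp only [not_exists] at hint
    have hfloor : ∀ d, ν d + t ∈ Ioo (⌊ν d + t⌋ : ℝ) (⌊ν d + t⌋ + 1) := fun d =>
      ⟨(Int.floor_le _).lt_of_ne fun h => hint d _ h.symm, Int.lt_floor_add_one _⟩
    have hl : ∀ d e, ⌊ν d + t⌋ - ν' d < ⌊ν e + t⌋ - ν' e + 1 := fun d e => by
      have hlt : ((⌊ν d + t⌋ - ⌊ν e + t⌋ - 1 : ℤ) : ℝ) < ν d - ν e := by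
        push_cast; linarith [(hfloor d).1, (hfloor e).2]
      have := ((h.sub d e).lt_iff' _).1 hlt
      push_cast at this
      linarith
    have hl0 : ∀ d, 0 < ⌊ν d + t⌋ - ν' d + 1 := fun d => by
      have := ((h.val d).lt_iff (⌊ν d + t⌋ + 1)).1 (by push_cast; linarith [(hfloor d).2])
      push_cast at this
      linarith
    obtain ⟨t', ht', hmem⟩ := exists_nonneg_forall_mem_Ioo _ hl hl0
    refine ⟨t', ht', fun d => IntEquiv.of_mem_Ioo (hfloor d) ⟨?_, ?_⟩⟩ <;>
      linarith [(hmem d).1, (hmem d).2]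

theorem reset (h : RegEquiv ν ν') (X : Set D) :
    RegEquiv (fun d => if d ∈ X then 0 else ν d) (fun d => if d ∈ X then 0 else ν' d) := by
  refine ⟨fun d => ?_, fun d e => ?_⟩
  · split_ifs
    exacts [IntEquiv.refl 0, h.val d]
  · split_ifs
    · exact IntEquiv.refl _
    · simpa only [zero_sub] using (h.val e).neg
    · simpa only [sub_zero] using h.val d
    · exact h.sub d e

end RegEquiv

theorem regEq_of_regEquiv {C : Type} (k : ℕ) {ν ν' : C → ℝ} (h : RegEquiv ν ν') :
    RegEq k ν ν' := fun i _ c c' => by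
  have hval := h.val c
  have hsub := h.sub c c'
  refine ⟨⟨?_, ?_, ?_⟩, ?_, ?_, ?_⟩
  exacts [mod_cast hval.lt_iff i, mod_cast hval.eq_iff i, mod_cast hval.lt_iff' i,
    mod_cast hsub.lt_iff i, mod_cast hsub.eq_iff i, mod_cast hsub.lt_iff' i]

theorem IntEquiv.of_forall_mem_Icc {x y : ℝ} {lo hi : ℤ} (hx : x ∈ Icc (lo : ℝ) hi)
    (hy : y ∈ Icc (lo : ℝ) hi)
    (h : ∀ m ∈ Icc lo hi, (x < m ↔ y < m) ∧ ((m : ℝ) < x ↔ (m : ℝ) < y)) :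
    IntEquiv x y := by
  refine IntEquiv.of_forall_lt_iff fun m => ?_
  by_cases hlo : m < lo
  · have : (m : ℝ) < lo := by exact_mod_cast hlo
    exact ⟨iff_of_false (by linarith [hx.1]) (by linarith [hy.1]),
      iff_of_true (by linarith [hx.1]) (by linarith [hy.1])⟩
  by_cases hhi : hi < m
  · have : (hi : ℝ) < m := by exact_mod_cast hhi
    exact ⟨iff_of_true (by linarith [hx.2]) (by linarith [hy.2]),
      iff_of_false (by linarith [hx.2]) (by linarith [hy.2])⟩
  exact h m ⟨not_lt.1 hlo, not_lt.1 hhi⟩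

theorem regEquiv_of_regEq {C : Type} {k : ℕ} {ν ν' : C → ℝ} (hν : IsVal k ν)
    (hν' : IsVal k ν') (h : RegEq k ν ν') : RegEquiv ν ν' := by
  refine ⟨fun c => IntEquiv.of_forall_mem_Icc (lo := 0) (hi := k) (by simpa using hν c)
    (by simpa using hν' c) fun m hm => ?_, fun c c' => ?_⟩
  · lift m to ℕ using hm.1
    have := (h m (by exact_mod_cast hm.2) c c).1
    push_cast
    exact ⟨this.1, this.2.2⟩
  · refine IntEquiv.of_forall_mem_Icc (lo := -k) (hi := k)
      ⟨by push_cast; linarith [hν c, hν c'], by push_cast; linarith [hν c, hν c']⟩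
      ⟨by push_cast; linarith [hν' c, hν' c'], by push_cast; linarith [hν' c, hν' c']⟩
      fun m hm => ?_
    obtain ⟨i, rfl | rfl⟩ := Int.eq_nat_or_neg m
    · have := (h i (by exact_mod_cast hm.2) c c').2
      push_cast
      exact ⟨this.1, this.2.2⟩
    · -- comparisons with `-i` are comparisons of the swapped difference with `i`
      have := (h i (by linarith [hm.1]) c' c).2
      push_cast
      rw [← neg_sub (ν c'), ← neg_sub (ν' c'), neg_lt_neg_iff, neg_lt_neg_iff, neg_lt_neg_iff,
        neg_lt_neg_iff]
      exact ⟨this.2.2, this.1⟩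

namespace Arena

variable {Conf Move : Type} {G : Arena Conf Move}

namespace FinRun

theorem ext {r r' : G.FinRun} (hn : r.n = r'.n)
    (hq : ∀ i (hi : i < r.n + 1) (hi' : i < r'.n + 1), r.q ⟨i, hi⟩ = r'.q ⟨i, hi'⟩)
    (hm : ∀ i (hi : i < r.n) (hi' : i < r'.n), r.m ⟨i, hi⟩ = r'.m ⟨i, hi'⟩) : r = r' := by
  obtain ⟨n, q, m, _⟩ := r
  obtain ⟨n', q', m', _⟩ := r'
  obtain rfl : n = n' := hn
  obtain rfl : q = q' := funext fun i => hq i i.2 i.2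
  obtain rfl : m = m' := funext fun i => hm i i.2 i.2
  rfl

def dropLast (r : G.FinRun) : G.FinRun where
  n := r.n - 1
  q i := r.q (Fin.castLE (by omega) i)
  m i := r.m (Fin.castLE (by omega) i)
  valid i := r.valid (Fin.castLE (by omega) i)

def lastMove (r : G.FinRun) (h : r.n ≠ 0) : Move := r.m ⟨r.n - 1, by omega⟩

def extendSome (r : G.FinRun) (mv : Move) : G.FinRun :=
  if h : ∃ q, G.Tr r.last mv q then r.extend mv h.choose h.choose_spec else r

variable {r : G.FinRun} {mv : Move} {q : Conf} {h : G.Tr r.last mv q}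

theorem last_extend : (r.extend mv q h).last = q := by
  simp [FinRun.last, FinRun.extend]

theorem time_extend : (r.extend mv q h).time = r.time + G.cost r.last mv := by
  change ∑ i : Fin (r.n + 1), G.cost (Fin.snoc (α := fun _ => Conf) r.q q i.castSucc)
    (Fin.snoc (α := fun _ => Move) r.m mv i) = _
  simp [Fin.sum_univ_castSucc, FinRun.time, FinRun.last]

theorem dropLast_extend : (r.extend mv q h).dropLast = r := by
  refine ext (by simp [dropLast, extend]) (fun i hi hi' => ?_) (fun i hi hi' => ?_)
  · exact Fin.snoc_castSucc (α := fun _ => Conf) q r.q ⟨i, hi'⟩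
  · exact Fin.snoc_castSucc (α := fun _ => Move) mv r.m ⟨i, hi'⟩

theorem lastMove_extend (hn : (r.extend mv q h).n ≠ 0) : (r.extend mv q h).lastMove hn = mv := by
  exact Fin.snoc_last (α := fun _ => Move) mv r.m

theorem time_single (q₀ : Conf) : (G.single q₀).time = 0 :=
  Fin.sum_univ_zero _

theorem extendSome_of_exists (hmv : ∃ q, G.Tr r.last mv q) :
    r.extendSome mv = r.extend mv hmv.choose hmv.choose_spec :=
  dif_pos hmv

theorem tr_last_extendSome (hmv : ∃ q, G.Tr r.last mv q) :
    G.Tr r.last mv (r.extendSome mv).last := by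
  rw [extendSome_of_exists hmv, last_extend]
  exact hmv.choose_spec

theorem time_extendSome (hmv : ∃ q, G.Tr r.last mv q) :
    (r.extendSome mv).time = r.time + G.cost r.last mv := by
  rw [extendSome_of_exists hmv, time_extend]

end FinRun

def profileMove (μ : G.MinStrategy) (χ : G.MaxStrategy) (r : G.FinRun) : Move :=
  if G.IsMin r.last then μ.1 r else χ.1 r

theorem exists_tr_profileMove (μ : G.MinStrategy) (χ : G.MaxStrategy) (r : G.FinRun) :
    ∃ q, G.Tr r.last (profileMove μ χ r) q := by
  unfold profileMove
  split_ifs with hr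
  exacts [μ.2 r hr, χ.2 r hr]

theorem play_succ (μ : G.MinStrategy) (χ : G.MaxStrategy) (q₀ : Conf) (n : ℕ) :
    G.play μ χ q₀ (n + 1) =
      (G.play μ χ q₀ n).extendSome (profileMove μ χ (G.play μ χ q₀ n)) := by
  rw [FinRun.extendSome_of_exists (exists_tr_profileMove μ χ _), play]
  unfold profileMove
  split_ifs <;> rfl

theorem n_play (μ : G.MinStrategy) (χ : G.MaxStrategy) (q₀ : Conf) (n : ℕ) :
    (G.play μ χ q₀ n).n = n := by
  induction n with
  | zero => rfl
  | succ n ih =>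
    rw [play_succ, FinRun.extendSome_of_exists (exists_tr_profileMove μ χ _)]
    exact congrArg (· + 1) ih

variable (G) (R : Conf → ℝ → Conf → ℝ → Prop)

def Answers (x : Conf) (a : ℝ) (mv : Move) (y : Conf) (b : ℝ) (mv' : Move) : Prop :=
  (∃ y', G.Tr y mv' y') ∧
    ∀ x' y', G.Tr x mv x' → G.Tr y mv' y' → R x' (a + G.cost x mv) y' (b + G.cost y mv')

/-- `R x a y b` relates configurations `x` and `y` reached at accumulated costs `a` and `b`. -/
structure IsCostBisim : Prop where
  symm : ∀ {x a y b}, R x a y b → R y b x a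
  isMin_iff : ∀ {x a y b}, R x a y b → (G.IsMin x ↔ G.IsMin y)
  exists_answers : ∀ {x a y b mv}, R x a y b → (∃ x', G.Tr x mv x') →
    ∃ mv', G.Answers R x a mv y b mv'

-- The fallback to an arbitrary available move keeps `simMin` and `simMax` legal strategies
-- on runs outside the coupled plays.
def answer (x : Conf) (a : ℝ) (y : Conf) (b : ℝ) (mv : Move) : Move :=
  if h : ∃ mv', G.Answers R x a mv y b mv' then h.choose
  else if h' : ∃ mv' y', G.Tr y mv' y' then h'.choose else mv

variable {G R}

theorem answers_answer {x y : Conf} {a b : ℝ} {mv : Move}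
    (h : ∃ mv', G.Answers R x a mv y b mv') :
    G.Answers R x a mv y b (G.answer R x a y b mv) := by
  rw [answer, dif_pos h]
  exact h.choose_spec

theorem exists_tr_answer {x y : Conf} {a b : ℝ} {mv : Move} (h : ∃ mv' y', G.Tr y mv' y') :
    ∃ y', G.Tr y (G.answer R x a y b mv) y' := by
  unfold answer
  split_ifs with h₁
  exacts [h₁.choose_spec.1, h.choose_spec]

theorem Answers.rel_extendSome {r r' : G.FinRun} {mv mv' : Move}
    (h : G.Answers R r.last r.time mv r'.last r'.time mv') (hmv : ∃ q, G.Tr r.last mv q) :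
    R (r.extendSome mv).last (r.extendSome mv).time (r'.extendSome mv').last
      (r'.extendSome mv').time := by
  rw [FinRun.time_extendSome hmv, FinRun.time_extendSome h.1]
  exact h.2 _ _ (FinRun.tr_last_extendSome hmv) (FinRun.tr_last_extendSome h.1)

variable (G R)

def shadowMove (μ' : G.MinStrategy) (x : Conf) (a : ℝ) (s : G.FinRun) (mv : Move) : Move :=
  if G.IsMin s.last then μ'.1 s else G.answer R x a s.last s.time mv

/-- The run from `y₀` that shadows the run `r`: Min plays `μ'`, Max answers the moves of `r`. -/
def shadow (μ' : G.MinStrategy) (y₀ : Conf) (r : G.FinRun) : G.FinRun :=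
  if h : r.n = 0 then G.single y₀
  else
    (shadow μ' y₀ r.dropLast).extendSome
      (G.shadowMove R μ' r.dropLast.last r.dropLast.time (shadow μ' y₀ r.dropLast)
        (r.lastMove h))
termination_by r.n
decreasing_by simp only [FinRun.dropLast]; omega

def simMin (μ' : G.MinStrategy) (y₀ : Conf) : G.MinStrategy :=
  ⟨fun r => let s := G.shadow R μ' y₀ r; G.answer R s.last s.time r.last r.time (μ'.1 s),
    fun r hr => exists_tr_answer ⟨_, μ'.2 (G.single r.last) hr⟩⟩

def simMax (μ : G.MinStrategy) (χ : G.MaxStrategy) (x₀ : Conf) : G.MaxStrategy :=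
  ⟨fun r' => let r := G.play μ χ x₀ r'.n; G.answer R r.last r.time r'.last r'.time (χ.1 r),
    fun r' hr' => exists_tr_answer ⟨_, χ.2 (G.single r'.last) hr'⟩⟩

variable {G R}

theorem shadow_single (μ' : G.MinStrategy) (x y₀ : Conf) :
    G.shadow R μ' y₀ (G.single x) = G.single y₀ := by
  rw [shadow]
  exact dif_pos rfl

theorem shadow_extendSome (μ' : G.MinStrategy) (y₀ : Conf) {r : G.FinRun} {mv : Move}
    (hmv : ∃ q, G.Tr r.last mv q) :
    G.shadow R μ' y₀ (r.extendSome mv) = (G.shadow R μ' y₀ r).extendSome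
      (G.shadowMove R μ' r.last r.time (G.shadow R μ' y₀ r) mv) := by
  rw [FinRun.extendSome_of_exists hmv, shadow]
  split_ifs with h
  · exact absurd h (Nat.succ_ne_zero r.n)
  · simp only [FinRun.dropLast_extend, FinRun.lastMove_extend]

theorem shadow_play_simMin (hR : G.IsCostBisim R) (μ' : G.MinStrategy) (χ : G.MaxStrategy)
    {x₀ y₀ : Conf} (h₀ : R x₀ 0 y₀ 0) (n : ℕ) :
    G.shadow R μ' y₀ (G.play (G.simMin R μ' y₀) χ x₀ n) =
        G.play μ' (G.simMax R (G.simMin R μ' y₀) χ x₀) y₀ n ∧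
      R (G.play (G.simMin R μ' y₀) χ x₀ n).last (G.play (G.simMin R μ' y₀) χ x₀ n).time
        (G.play μ' (G.simMax R (G.simMin R μ' y₀) χ x₀) y₀ n).last
        (G.play μ' (G.simMax R (G.simMin R μ' y₀) χ x₀) y₀ n).time := by
  set μ := G.simMin R μ' y₀
  set χ' := G.simMax R μ χ x₀
  induction n with
  | zero =>
    refine ⟨shadow_single μ' x₀ y₀, ?_⟩
    change R x₀ (G.single x₀).time y₀ (G.single y₀).time
    rwa [FinRun.time_single, FinRun.time_single]
  | succ n ih =>
    obtain ⟨hshadow, hrel⟩ := ih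
    set r := G.play μ χ x₀ n
    set r' := G.play μ' χ' y₀ n
    rw [play_succ, play_succ, shadow_extendSome μ' y₀ (exists_tr_profileMove μ χ r), hshadow]
    by_cases hM : G.IsMin r.last
    · have hM' := (hR.isMin_iff hrel).1 hM
      have hx : profileMove μ χ r = G.answer R r'.last r'.time r.last r.time (μ'.1 r') := by
        unfold profileMove
        rw [if_pos hM, ← hshadow]
        rfl
      have hy : profileMove μ' χ' r' = μ'.1 r' := if_pos hM'
      have hs : G.shadowMove R μ' r.last r.time r' (profileMove μ χ r) = μ'.1 r' := if_pos hM'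
      rw [hs, hx, hy]
      have hans := answers_answer (hR.exists_answers (hR.symm hrel) (μ'.2 r' hM'))
      exact ⟨rfl, hR.symm (hans.rel_extendSome (μ'.2 r' hM'))⟩
    · have hM' : ¬ G.IsMin r'.last := fun h => hM ((hR.isMin_iff hrel).2 h)
      have hx : profileMove μ χ r = χ.1 r := if_neg hM
      have hy : profileMove μ' χ' r' = G.answer R r.last r.time r'.last r'.time (χ.1 r) := by
        unfold profileMove
        rw [if_neg hM']
        show G.answer R (G.play μ χ x₀ r'.n).last _ _ _ _ = _
        rw [n_play]
      have hs : G.shadowMove R μ' r.last r.time r' (profileMove μ χ r) =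
          G.answer R r.last r.time r'.last r'.time (χ.1 r) := by
        rw [← hx]
        exact if_neg hM'
      rw [hs, hx, hy]
      have hans := answers_answer (hR.exists_answers hrel (χ.2 r hM))
      exact ⟨rfl, hans.rel_extendSome (χ.2 r hM)⟩

theorem FinRun.time_mem_Icc {K : ℝ} (hcost : ∀ x mv y, G.Tr x mv y → G.cost x mv ∈ Icc 0 K)
    (r : G.FinRun) : r.time ∈ Icc 0 (r.n * K) :=
  ⟨Finset.sum_nonneg fun i _ => (hcost _ _ _ (r.valid i)).1,
    (Finset.sum_le_card_nsmul _ _ _ fun i _ => (hcost _ _ _ (r.valid i)).2).trans_eq (by simp)⟩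

theorem AMin_mem_Icc {K : ℝ} (hcost : ∀ x mv y, G.Tr x mv y → G.cost x mv ∈ Icc 0 K)
    (q₀ : Conf) (μ : G.MinStrategy) (χ : G.MaxStrategy) : G.AMin q₀ μ χ ∈ Icc 0 K :=
  Real.limsup_mem_Icc <| (eventually_ge_atTop 1).mono fun n hn => by
    have h := (G.play μ χ q₀ n).time_mem_Icc hcost
    rw [n_play] at h
    have hn : (0 : ℝ) < n := by exact_mod_cast hn
    exact ⟨div_nonneg h.1 hn.le, (div_le_iff₀ hn).2 (by linarith [h.2])⟩

theorem upperVal_le_of_forall_exists_AMin_le {K : ℝ}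
    (hbdd : ∀ q μ χ, G.AMin q μ χ ∈ Icc 0 K) {x₀ y₀ : Conf}
    (h : ∀ μ', ∃ μ, ∀ χ, ∃ χ', G.AMin x₀ μ χ ≤ G.AMin y₀ μ' χ') :
    G.upperVal x₀ ≤ G.upperVal y₀ := by
  rcases isEmpty_or_nonempty G.MinStrategy with hμ | hμ
  · simp only [upperVal, Real.iInf_of_isEmpty, le_refl]
  refine le_ciInf fun μ' => ?_
  obtain ⟨μ, hμ⟩ := h μ'
  have hbddBelow : BddBelow (range fun μ => ⨆ χ, G.AMin x₀ μ χ) :=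
    ⟨0, by rintro _ ⟨μ, rfl⟩; exact Real.iSup_nonneg fun χ => (hbdd _ _ _).1⟩
  refine (ciInf_le hbddBelow μ).trans
    (Real.iSup_le (fun χ => ?_) (Real.iSup_nonneg fun χ' => (hbdd _ _ _).1))
  obtain ⟨χ', hχ'⟩ := hμ χ
  exact hχ'.trans (le_ciSup ⟨K, by rintro _ ⟨χ', rfl⟩; exact (hbdd _ _ _).2⟩ χ')

theorem AMin_simMin {D : ℝ} (hR : G.IsCostBisim R)
    (hclose : ∀ x a y b, R x a y b → |a - b| ≤ D) (μ' : G.MinStrategy) (χ : G.MaxStrategy)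
    {x₀ y₀ : Conf} (h₀ : R x₀ 0 y₀ 0) :
    G.AMin x₀ (G.simMin R μ' y₀) χ =
      G.AMin y₀ μ' (G.simMax R (G.simMin R μ' y₀) χ x₀) :=
  Real.limsup_div_eq_of_abs_sub_le fun n => hclose _ _ _ _ (shadow_play_simMin hR μ' χ h₀ n).2

theorem upperVal_eq_of_isCostBisim {D K : ℝ} (hR : G.IsCostBisim R)
    (hclose : ∀ x a y b, R x a y b → |a - b| ≤ D)
    (hcost : ∀ x mv y, G.Tr x mv y → G.cost x mv ∈ Icc 0 K) {x₀ y₀ : Conf}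
    (h₀ : R x₀ 0 y₀ 0) : G.upperVal x₀ = G.upperVal y₀ := by
  have key : ∀ {x₀ y₀}, R x₀ 0 y₀ 0 → G.upperVal x₀ ≤ G.upperVal y₀ := fun h₀ =>
    upperVal_le_of_forall_exists_AMin_le (AMin_mem_Icc hcost) fun μ' =>
      ⟨G.simMin R μ' _, fun χ => ⟨_, (AMin_simMin hR hclose μ' χ h₀).le⟩⟩
  exact le_antisymm (key h₀) (key (hR.symm h₀))

end Arena

def augment {C : Type} (ν : C → ℝ) (a : ℝ) : Option C → ℝ := fun o => o.elim a ν

theorem augment_add {C : Type} (ν : C → ℝ) (a t : ℝ) :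
    (fun o => augment ν a o + t) = augment (fun c => ν c + t) (a + t) := by
  funext o
  cases o <;> rfl

theorem augment_reset {C : Type} (ν : C → ℝ) (a : ℝ) (X : Set C) :
    (fun o => if o ∈ some '' X then 0 else augment ν a o) =
      augment (fun c => if c ∈ X then 0 else ν c) a := by
  funext o
  cases o <;> simp [augment]

theorem RegEquiv.augment_zero {C : Type} {ν ν' : C → ℝ} (h : RegEquiv ν ν') :
    RegEquiv (augment ν 0) (augment ν' 0) := by
  refine ⟨fun o => ?_, fun o o' => ?_⟩
  · cases o
    exacts [IntEquiv.refl 0, h.val _]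
  · cases o <;> cases o'
    · exact IntEquiv.refl _
    · simpa [augment] using (h.val _).neg
    · simpa [augment] using h.val _
    · exact h.sub _ _

theorem RegEquiv.of_augment {C : Type} {ν ν' : C → ℝ} {a b : ℝ}
    (h : RegEquiv (augment ν a) (augment ν' b)) : RegEquiv ν ν' :=
  ⟨fun c => h.val (some c), fun c c' => h.sub (some c) (some c')⟩

namespace TimedGame

variable (T : TimedGame)

theorem regEq_of_regionOf_eq {s s' : T.Q} (hs' : s' ∈ T.S) (h : T.regionOf s = T.regionOf s') :
    RegEq T.k s.2 s'.2 := by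
  have hmem : s'.2 ∈ (T.clockRegionOf s'.2).1 :=
    ⟨T.bounded s' hs',
      fun _ _ _ _ => ⟨⟨Iff.rfl, Iff.rfl, Iff.rfl⟩, Iff.rfl, Iff.rfl, Iff.rfl⟩⟩
  rw [← show (T.clockRegionOf s.2).1 = (T.clockRegionOf s'.2).1 from congrArg (·.2.1) h] at hmem
  exact hmem.2

theorem delay_mem_S {ℓ : T.L} {ν : T.C → ℝ} {t u : ℝ} (h₀ : (ℓ, ν) ∈ T.S)
    (ht : (ℓ, fun c => ν c + t) ∈ T.S) (hu₀ : 0 ≤ u) (hut : u ≤ t) :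
    (ℓ, fun c => ν c + u) ∈ T.S := by
  rcases hu₀.eq_or_lt with rfl | hu
  · simpa using h₀
  have htpos : 0 < t := hu.trans_le hut
  have hmem := (T.S_zone.2 ℓ).add_smul_sub_mem h₀ ht
    ⟨div_nonneg hu₀ htpos.le, (div_le_one htpos).2 hut⟩
  have hseg : (fun c => ν c + u) = ν + (u / t) • ((fun c => ν c + t) - ν) := by
    funext c
    simp only [Pi.add_apply, Pi.smul_apply, Pi.sub_apply, smul_eq_mul, add_sub_cancel_left]
    field_simp
  rw [hseg]
  exact hmem

theorem trans_of_regEq {x y : T.Q} (hy : y ∈ T.S) (hloc : x.1 = y.1) {t t' : ℝ} {a : T.A}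
    {p : T.Q} (ht' : 0 ≤ t') (hdelay : RegEq T.k (fun c => x.2 c + t) (fun c => y.2 c + t'))
    (hreset : RegEq T.k (T.resetv (fun c => x.2 c + t) (T.ϱ a))
      (T.resetv (fun c => y.2 c + t') (T.ϱ a)))
    (hx : T.Trans x (t, a) p) : T.Trans y (t', a) (T.tsucc y (t', a)) := by
  obtain ⟨ht, hstay, hen, rfl, hp⟩ := hx
  rw [hloc] at hstay hen
  have hSy := (T.S_zone.1 _ _ _ hdelay).1 (hstay t ht le_rfl)
  refine ⟨ht', fun u hu₀ hut => T.delay_mem_S hy hSy hu₀ hut,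
    ((T.En_zone a).1 _ _ _ hdelay).1 hen, rfl, ?_⟩
  have hp' : (T.δ y.1 a, T.resetv (fun c => x.2 c + t) (T.ϱ a)) ∈ T.S := by
    rw [← hloc]; exact hp
  exact (T.S_zone.1 _ _ _ hreset).1 hp'

/-- Total elapsed time is tracked as an extra clock, indexed by `none`. -/
def SameRegionWithTime (x : {s : T.Q // s ∈ T.S}) (a : ℝ) (y : {s : T.Q // s ∈ T.S})
    (b : ℝ) : Prop :=
  x.1.1 = y.1.1 ∧ RegEquiv (augment x.1.2 a) (augment y.1.2 b)

variable {T}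

theorem SameRegionWithTime.exists_answers {x y : {s : T.Q // s ∈ T.S}} {a b : ℝ}
    {mv : ℝ × T.A} (h : T.SameRegionWithTime x a y b) (hmv : ∃ x', T.taArena.Tr x mv x') :
    ∃ mv', T.taArena.Answers T.SameRegionWithTime x a mv y b mv' := by
  have := T.finC
  obtain ⟨x', hx'⟩ := hmv
  obtain ⟨hloc, hequiv⟩ := h
  have hTr : T.Trans x.1 mv x'.1 := hx'
  obtain ⟨t', ht', hdelay⟩ := hequiv.exists_delay hTr.1
  rw [augment_add, augment_add] at hdelay
  have hreset := hdelay.reset (some '' T.ϱ mv.2)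
  rw [augment_reset, augment_reset] at hreset
  have hsucc : T.Trans y.1 (t', mv.2) (T.tsucc y.1 (t', mv.2)) :=
    T.trans_of_regEq y.2 hloc ht' (regEq_of_regEquiv _ hdelay.of_augment)
      (regEq_of_regEquiv _ hreset.of_augment) hTr
  refine ⟨(t', mv.2), ⟨⟨_, hsucc.2.2.2.2⟩, hsucc⟩, fun x'' y'' hx'' hy'' => ?_⟩
  have hx'' : x''.1 = T.tsucc x.1 mv := hx''.2.2.2.1
  have hy'' : y''.1 = T.tsucc y.1 (t', mv.2) := hy''.2.2.2.1
  refine ⟨by rw [hx'', hy'']; exact congrArg (T.δ · mv.2) hloc, ?_⟩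
  rw [hx'', hy'']
  exact hreset

theorem isCostBisim_sameRegionWithTime : T.taArena.IsCostBisim T.SameRegionWithTime where
  symm h := ⟨h.1.symm, h.2.symm⟩
  isMin_iff h := by
    change _ ∈ T.LMin ↔ _ ∈ T.LMin
    rw [h.1]
  exists_answers := SameRegionWithTime.exists_answers

theorem SameRegionWithTime.abs_sub_le_one {x y : {s : T.Q // s ∈ T.S}} {a b : ℝ}
    (h : T.SameRegionWithTime x a y b) : |a - b| ≤ 1 :=
  (h.2.val none).abs_sub_lt_one.le

theorem taArena_cost_mem_Icc [Nonempty T.C] {x y : {s : T.Q // s ∈ T.S}} {mv : ℝ × T.A}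
    (h : T.taArena.Tr x mv y) : T.taArena.cost x mv ∈ Icc 0 (T.k : ℝ) := by
  obtain ⟨c⟩ := ‹Nonempty T.C›
  have htr : T.Trans x.1 mv y.1 := h
  have hdelayed : x.1.2 c + mv.1 ≤ T.k := (T.bounded _ (htr.2.1 mv.1 htr.1 le_rfl) c).2
  change mv.1 ∈ Icc 0 (T.k : ℝ)
  exact ⟨htr.1, by linarith [(T.bounded _ x.2 c).1]⟩

end TimedGame

/-- The value of every average-time game is regionally constant: states of the
timed automaton lying in the same region have the same value. -/
theorem averageTimeGame_value_regionally_constant (T : TimedGame)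
    (s s' : T.Q) (hs : s ∈ T.S) (hs' : s' ∈ T.S)
    (h : T.regionOf s = T.regionOf s') :
    Arena.val T.taArena ⟨s, hs⟩ = Arena.val T.taArena ⟨s', hs'⟩ := by
  have hloc : s.1 = s'.1 := congrArg (fun R : T.Region => R.1) h
  rcases isEmpty_or_nonempty T.C with hC | hC
  · obtain rfl : s = s' := Prod.ext hloc (Subsingleton.elim _ _)
    rfl
  have hequiv :=
    regEquiv_of_regEq (T.bounded s hs) (T.bounded s' hs') (T.regEq_of_regionOf_eq hs' h)
  exact Arena.upperVal_eq_of_isCostBisim TimedGame.isCostBisim_sameRegionWithTime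
    (fun _ _ _ _ => TimedGame.SameRegionWithTime.abs_sub_le_one)
    (fun _ _ _ => TimedGame.taArena_cost_mem_Icc)
    ⟨hloc, hequiv.augment_zero⟩
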